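/- Let (X, d, ≪, ≤, τ) and (Y, d̃, ≪̃, ≤̃, τ̃) be Lorentzian length spaces with (X, d) and (Y, d̃) locally compact, and let f : X → Y be a surjective distance homothetic map that is locally causally Lipschitz. If X is stably causal (the relation K⁺ on X × X is antisymmetric), then Y is stably causal (the relation K⁺ on Y × Y is antisymmetric). -/

import Mathlib

open scoped NNReal ENNReal
open Set Filter Topology

/-- A Lorentzian pre-length space: a causal space `(X, ≪, ≤)` carried by a metric space `X`,
together with a time separation function `τ : X × X → [0, ∞]`. -/
structure LorentzianPreLengthSpace (X : Type*) [MetricSpace X] where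
  /-- The chronological relation `≪`. -/
  chron : X → X → Prop
  /-- The causal relation `≤`. -/
  causal : X → X → Prop
  chron_trans : ∀ {x y z : X}, chron x y → chron y z → chron x z
  causal_refl : ∀ x : X, causal x x
  causal_trans : ∀ {x y z : X}, causal x y → causal y z → causal x z
  chron_imp_causal : ∀ {x y : X}, chron x y → causal x y
  /-- The time separation function `τ`. -/
  tau : X → X → ℝ≥0∞
  tau_lsc : LowerSemicontinuous fun p : X × X => tau p.1 p.2
  tau_rev_triangle : ∀ {x y z : X}, causal x y → causal y z → tau x y + tau y z ≤ tau x z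
  tau_eq_zero : ∀ {x y : X}, ¬ causal x y → tau x y = 0
  tau_pos_iff : ∀ {x y : X}, 0 < tau x y ↔ chron x y

namespace LorentzianPreLengthSpace

variable {X : Type*} [MetricSpace X] (L : LorentzianPreLengthSpace X)

/-- Chronological future `I⁺(x)`. -/
def Iplus (x : X) : Set X := {y | L.chron x y}

/-- Chronological past `I⁻(x)`. -/
def Iminus (x : X) : Set X := {y | L.chron y x}

/-- Causal future `J⁺(x)`. -/
def Jplus (x : X) : Set X := {y | L.causal x y}

/-- Causal past `J⁻(x)`. -/
def Jminus (x : X) : Set X := {y | L.causal y x}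

/-- A future directed causal curve on `[a,b]`: non-constant, Lipschitz, and order preserving
from the order of `[a,b]` to the causal relation. -/
def IsFutureCausalCurve (γ : ℝ → X) (a b : ℝ) : Prop :=
  a < b ∧ (∃ K : ℝ≥0, LipschitzOnWith K γ (Icc a b)) ∧
    (∃ s ∈ Icc a b, ∃ t ∈ Icc a b, γ s ≠ γ t) ∧
    ∀ ⦃s⦄, s ∈ Icc a b → ∀ ⦃t⦄, t ∈ Icc a b → s < t → L.causal (γ s) (γ t)

/-- A future directed timelike curve on `[a,b]`. -/
def IsFutureTimelikeCurve (γ : ℝ → X) (a b : ℝ) : Prop :=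
  a < b ∧ (∃ K : ℝ≥0, LipschitzOnWith K γ (Icc a b)) ∧
    (∃ s ∈ Icc a b, ∃ t ∈ Icc a b, γ s ≠ γ t) ∧
    ∀ ⦃s⦄, s ∈ Icc a b → ∀ ⦃t⦄, t ∈ Icc a b → s < t → L.chron (γ s) (γ t)

/-- The `τ`-length of a curve: the infimum over all partitions
`a = t₀ < t₁ < ⋯ < t_N = b` (with `N ≥ 1`) of `∑ τ(γ(tᵢ), γ(tᵢ₊₁))`. -/
noncomputable def tauLength (γ : ℝ → X) (a b : ℝ) : ℝ≥0∞ :=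
  ⨅ n : ℕ, ⨅ t : {t : Fin (n + 2) → ℝ // StrictMono t ∧ t 0 = a ∧ t (Fin.last (n + 1)) = b},
    ∑ i : Fin (n + 1), L.tau (γ (t.1 i.castSucc)) (γ (t.1 i.succ))

/-- Causal path connectedness: causally related (distinct) points are joined by a future
directed causal curve, chronologically related points by a future directed timelike curve. -/
def CausallyPathConnected : Prop :=
  (∀ x y : X, L.causal x y → x ≠ y →
      ∃ γ : ℝ → X, ∃ a b : ℝ, L.IsFutureCausalCurve γ a b ∧ γ a = x ∧ γ b = y) ∧
  (∀ x y : X, L.chron x y →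
      ∃ γ : ℝ → X, ∃ a b : ℝ, L.IsFutureTimelikeCurve γ a b ∧ γ a = x ∧ γ b = y)

/-- `p ≤_U q`: there is a future directed causal curve from `p` to `q` with image in `U`. -/
def CausalInside (U : Set X) (p q : X) : Prop :=
  ∃ γ : ℝ → X, ∃ a b : ℝ, L.IsFutureCausalCurve γ a b ∧ γ a = p ∧ γ b = q ∧ γ '' Icc a b ⊆ U

/-- `U` is causally closed: the relation `≤_U` is closed under limits inside `U`. -/
def CausallyClosedNbhd (U : Set X) : Prop :=
  ∀ (p q : X) (pn qn : ℕ → X), (∀ n, L.CausalInside U (pn n) (qn n)) →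
    Tendsto pn atTop (𝓝 p) → Tendsto qn atTop (𝓝 q) → p ∈ U → q ∈ U → L.CausalInside U p q

/-- Every point has a causally closed open neighborhood. -/
def LocallyCausallyClosed : Prop :=
  ∀ x : X, ∃ U : Set X, IsOpen U ∧ x ∈ U ∧ L.CausallyClosedNbhd U

/-- Localizability: every point has a localizing open neighborhood `Ω`. -/
def Localizable : Prop :=
  ∀ x : X, ∃ Ω : Set X, IsOpen Ω ∧ x ∈ Ω ∧
    (∃ C : ℝ≥0, ∀ (γ : ℝ → X) (a b : ℝ), L.IsFutureCausalCurve γ a b →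
        γ '' Icc a b ⊆ Ω → eVariationOn γ (Icc a b) ≤ C) ∧
    ∃ ω : X → X → ℝ≥0∞,
      ContinuousOn (fun pq : X × X => ω pq.1 pq.2) (Ω ×ˢ Ω) ∧
      (∀ p ∈ Ω, ∀ q ∈ Ω, ω p q ≠ ⊤) ∧
      (∀ p ∈ Ω, ∀ q ∈ Ω, ∀ r ∈ Ω, L.causal p q → L.causal q r → ω p q + ω q r ≤ ω p r) ∧
      (∀ p ∈ Ω, ∀ q ∈ Ω, ¬ L.causal p q → ω p q = 0) ∧
      (∀ p ∈ Ω, ∀ q ∈ Ω, (0 < ω p q ↔ L.chron p q)) ∧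
      (∀ y ∈ Ω, (L.Iplus y ∩ Ω).Nonempty ∧ (L.Iminus y ∩ Ω).Nonempty) ∧
      (∀ p ∈ Ω, ∀ q ∈ Ω, L.causal p q → p ≠ q →
        ∃ γ : ℝ → X, ∃ a b : ℝ, L.IsFutureCausalCurve γ a b ∧ γ a = p ∧ γ b = q ∧
          γ '' Icc a b ⊆ Ω ∧ L.tauLength γ a b = ω p q ∧
          ∀ (σ : ℝ → X) (c e : ℝ), L.IsFutureCausalCurve σ c e → σ c = p → σ e = q →
            σ '' Icc c e ⊆ Ω → L.tauLength σ c e ≤ L.tauLength γ a b)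

/-- `L` is a Lorentzian length space: causally path connected, locally causally closed,
localizable, and `τ` is the supremum of `τ`-lengths of connecting causal curves
(the supremum of the empty set being `0`). -/
def IsLengthSpace : Prop :=
  L.CausallyPathConnected ∧ L.LocallyCausallyClosed ∧ L.Localizable ∧
    ∀ x y : X, L.tau x y = sSup {ℓ : ℝ≥0∞ | ∃ γ : ℝ → X, ∃ a b : ℝ,
      L.IsFutureCausalCurve γ a b ∧ γ a = x ∧ γ b = y ∧ ℓ = L.tauLength γ a b}

/-- `K⁺`: the smallest closed and transitive relation containing `J⁺`. -/
def Kplus : Set (X × X) :=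
  ⋂₀ {R : Set (X × X) | IsClosed R ∧ (∀ a b c : X, (a, b) ∈ R → (b, c) ∈ R → (a, c) ∈ R) ∧
      {pq : X × X | L.causal pq.1 pq.2} ⊆ R}

/-- The Alexandrov topology, generated by the chronological diamonds. -/
def AlexandrovTopology : TopologicalSpace X :=
  TopologicalSpace.generateFrom {s : Set X | ∃ x y : X, s = L.Iplus x ∩ L.Iminus y}

/-- Strong causality: the Alexandrov topology coincides with the metric topology. -/
def StronglyCausal : Prop :=
  L.AlexandrovTopology = (inferInstance : TopologicalSpace X)

/-- Non-total imprisonment: causal curves in a compact set have uniformly bounded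
`d`-arclength. -/
def NonTotallyImprisoning : Prop :=
  ∀ K : Set X, IsCompact K → ∃ C : ℝ≥0, ∀ (γ : ℝ → X) (a b : ℝ),
    L.IsFutureCausalCurve γ a b → γ '' Icc a b ⊆ K → eVariationOn γ (Icc a b) ≤ C

/-- Global hyperbolicity. -/
def GloballyHyperbolic : Prop :=
  L.NonTotallyImprisoning ∧ ∀ x y : X, IsCompact (L.Jplus x ∩ L.Jminus y)

/-- Causality: the causal relation is antisymmetric. -/
def Causal : Prop := ∀ x y : X, L.causal x y → L.causal y x → x = y

/-- Causal simplicity. -/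
def CausallySimple : Prop :=
  L.Causal ∧ ∀ x : X, IsClosed (L.Jplus x) ∧ IsClosed (L.Jminus x)

/-- Distinguishing. -/
def Distinguishing : Prop :=
  (∀ x y : X, L.Iplus x = L.Iplus y → x = y) ∧ (∀ x y : X, L.Iminus x = L.Iminus y → x = y)

/-- Reflectivity. -/
def Reflective : Prop :=
  (∀ x y : X, L.Iplus x ⊆ L.Iplus y → L.Iminus y ⊆ L.Iminus x) ∧
  (∀ x y : X, L.Iminus y ⊆ L.Iminus x → L.Iplus x ⊆ L.Iplus y)

/-- Causal continuity. -/
def CausallyContinuous : Prop := L.Distinguishing ∧ L.Reflective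

/-- Stable causality: `K⁺` is antisymmetric. -/
def StablyCausal : Prop := ∀ x y : X, (x, y) ∈ L.Kplus → (y, x) ∈ L.Kplus → x = y

end LorentzianPreLengthSpace

/-- A distance homothetic map: `τ̃(f p, f q) = c · τ(p, q)` for some constant `c > 0`. -/
def DistanceHomothetic {X Y : Type*} [MetricSpace X] [MetricSpace Y]
    (LX : LorentzianPreLengthSpace X) (LY : LorentzianPreLengthSpace Y) (f : X → Y) : Prop :=
  ∃ c : ℝ≥0, 0 < c ∧ ∀ p q : X, LY.tau (f p) (f q) = (c : ℝ≥0∞) * LX.tau p q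

/-- A locally causally Lipschitz map. -/
def LocallyCausallyLipschitz {X Y : Type*} [MetricSpace X] [MetricSpace Y]
    (LX : LorentzianPreLengthSpace X) (f : X → Y) : Prop :=
  ∀ x : X, ∃ U : Set X, IsOpen U ∧ x ∈ U ∧ ∃ M : ℝ, 0 < M ∧
    ∀ x1 ∈ U, ∀ x2 ∈ U, LX.causal x1 x2 → dist (f x1) (f x2) ≤ M * dist x1 x2

/-! Let `g` be a right inverse of `f`. Since `f` preserves `≪` in both directions and `≪` is
open, every chronological diamond around `g v` contains the image under `g` of a neighbourhood
of `v`. In a locally compact stably causal space such diamonds shrink to their centre: a diamond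
meeting a small sphere around `q` for every choice of its vertices produces a point of the
sphere that is `K⁺`-related to `q` in both directions. Hence `g` is continuous, and the pullback
of `K⁺` along `g × g` is closed, transitive and contains `≪`, hence also its closure `≤`; it
therefore contains `K⁺` of `Y`, and antisymmetry transfers because `g` is injective. -/

namespace LorentzianPreLengthSpace

variable {X : Type*} [MetricSpace X] (L : LorentzianPreLengthSpace X)

lemma subset_Kplus : {pq : X × X | L.causal pq.1 pq.2} ⊆ L.Kplus :=
  fun _ h => mem_sInter.2 fun _ hR => hR.2.2 h

lemma isClosed_Kplus : IsClosed L.Kplus :=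
  isClosed_sInter fun _ hR => hR.1

lemma Kplus_trans {a b c : X} (hab : (a, b) ∈ L.Kplus) (hbc : (b, c) ∈ L.Kplus) :
    (a, c) ∈ L.Kplus :=
  mem_sInter.2 fun R hR => hR.2.1 a b c (mem_sInter.1 hab R hR) (mem_sInter.1 hbc R hR)

lemma Kplus_subset {R : Set (X × X)} (hR : IsClosed R)
    (htrans : ∀ a b c : X, (a, b) ∈ R → (b, c) ∈ R → (a, c) ∈ R)
    (hJ : {pq : X × X | L.causal pq.1 pq.2} ⊆ R) : L.Kplus ⊆ R :=
  sInter_subset_of_mem ⟨hR, htrans, hJ⟩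

lemma mem_Kplus_of_tendsto {ι : Type*} {l : Filter ι} [l.NeBot] {x y : ι → X} {a b : X}
    (hx : Tendsto x l (𝓝 a)) (hy : Tendsto y l (𝓝 b)) (h : ∀ i, L.causal (x i) (y i)) :
    (a, b) ∈ L.Kplus :=
  L.isClosed_Kplus.mem_of_tendsto (hx.prodMk_nhds hy)
    (Eventually.of_forall fun i => L.subset_Kplus (h i))

lemma isOpen_chron : IsOpen {pq : X × X | L.chron pq.1 pq.2} := by
  convert L.tau_lsc.isOpen_preimage 0 using 1
  ext
  exact L.tau_pos_iff.symm

lemma isOpen_Iplus (x : X) : IsOpen (L.Iplus x) :=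
  L.isOpen_chron.preimage (Continuous.prodMk_right x)

lemma isOpen_Iminus (y : X) : IsOpen (L.Iminus y) :=
  L.isOpen_chron.preimage (continuous_id.prodMk continuous_const)

lemma chron_of_causal_of_chron {x y z : X} (hxy : L.causal x y) (hyz : L.chron y z) :
    L.chron x z :=
  L.tau_pos_iff.1 <| (L.tau_pos_iff.2 hyz).trans_le <|
    le_add_self.trans (L.tau_rev_triangle hxy (L.chron_imp_causal hyz))

lemma causal_subset_closure_chron (h : ∀ x, x ∈ closure (L.Iplus x)) :
    {pq : X × X | L.causal pq.1 pq.2} ⊆ closure {pq : X × X | L.chron pq.1 pq.2} := by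
  rintro ⟨x, y⟩ hxy
  exact map_mem_closure (Continuous.prodMk_right x) (h y) fun _ hz =>
    L.chron_of_causal_of_chron hxy hz

namespace IsFutureTimelikeCurve

variable {L} {γ : ℝ → X} {a b : ℝ}

lemma continuousOn (hγ : L.IsFutureTimelikeCurve γ a b) : ContinuousOn γ (Icc a b) :=
  hγ.2.1.choose_spec.continuousOn

lemma causal_of_le (hγ : L.IsFutureTimelikeCurve γ a b) {s t : ℝ} (hs : s ∈ Icc a b)
    (ht : t ∈ Icc a b) (hst : s ≤ t) : L.causal (γ s) (γ t) := by
  rcases hst.lt_or_eq with hlt | rfl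
  · exact L.chron_imp_causal (hγ.2.2.2 hs ht hlt)
  · exact L.causal_refl _

lemma mem_closure_Iminus (hγ : L.IsFutureTimelikeCurve γ a b) :
    γ b ∈ closure (L.Iminus (γ b)) := by
  have hb : b ∈ Icc a b := right_mem_Icc.2 hγ.1.le
  have hcl : b ∈ closure (Ico a b) := by rwa [closure_Ico hγ.1.ne]
  refine closure_mono ?_
    (((hγ.continuousOn b hb).mono Ico_subset_Icc_self).mem_closure_image hcl)
  rintro _ ⟨t, ht, rfl⟩
  exact hγ.2.2.2 (Ico_subset_Icc_self ht) hb ht.2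

lemma mem_closure_Iplus (hγ : L.IsFutureTimelikeCurve γ a b) :
    γ a ∈ closure (L.Iplus (γ a)) := by
  have ha : a ∈ Icc a b := left_mem_Icc.2 hγ.1.le
  have hcl : a ∈ closure (Ioc a b) := by rwa [closure_Ioc hγ.1.ne]
  refine closure_mono ?_
    (((hγ.continuousOn a ha).mono Ioc_subset_Icc_self).mem_closure_image hcl)
  rintro _ ⟨t, ht, rfl⟩
  exact hγ.2.2.2 ha (Ioc_subset_Icc_self ht) ht.1

lemma exists_dist_eq (hγ : L.IsFutureTimelikeCurve γ a b) (q : X) {ρ : ℝ}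
    (ha : dist (γ a) q ≤ ρ) (hb : ρ ≤ dist (γ b) q) :
    ∃ z, dist z q = ρ ∧ L.causal (γ a) z ∧ L.causal z (γ b) := by
  have hab := hγ.1.le
  have hcont : ContinuousOn (fun t => dist (γ t) q) (Icc a b) :=
    (continuous_id.dist continuous_const).comp_continuousOn hγ.continuousOn
  obtain ⟨c, hc, hcρ⟩ := intermediate_value_Icc hab hcont ⟨ha, hb⟩
  exact ⟨γ c, hcρ, hγ.causal_of_le (left_mem_Icc.2 hab) hc hc.1,
    hγ.causal_of_le hc (right_mem_Icc.2 hab) hc.2⟩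

end IsFutureTimelikeCurve

variable {L}

lemma IsLengthSpace.mem_closure_Iminus (hL : L.IsLengthSpace) (x : X) :
    x ∈ closure (L.Iminus x) := by
  obtain ⟨Ω, -, hxΩ, -, -, -, -, -, -, -, hI, -⟩ := hL.2.2.1 x
  obtain ⟨z, hzx, -⟩ := (hI x hxΩ).2
  obtain ⟨γ, a, b, hγ, -, rfl⟩ := hL.1.2 z x hzx
  exact hγ.mem_closure_Iminus

lemma IsLengthSpace.mem_closure_Iplus (hL : L.IsLengthSpace) (x : X) :
    x ∈ closure (L.Iplus x) := by
  obtain ⟨Ω, -, hxΩ, -, -, -, -, -, -, -, hI, -⟩ := hL.2.2.1 x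
  obtain ⟨z, hxz, -⟩ := (hI x hxΩ).1
  obtain ⟨γ, a, b, hγ, rfl, -⟩ := hL.1.2 x z hxz
  exact hγ.mem_closure_Iplus

lemma StablyCausal.exists_chron_diamond_disjoint (hsc : L.StablyCausal) {q : X}
    (hq_past : q ∈ closure (L.Iminus q)) (hq_fut : q ∈ closure (L.Iplus q))
    {U : Set X} (hU : IsOpen U) (hqU : q ∈ U) {S : Set X} (hS : IsCompact S) (hqS : q ∉ S) :
    ∃ x ∈ U, ∃ y, L.chron x q ∧ L.chron q y ∧ ∀ z ∈ S, L.causal x z → ¬ L.causal z y := by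
  by_contra! h
  obtain ⟨x, hx, hxq⟩ := mem_closure_iff_seq_limit.1 (hU.inter_closure ⟨hqU, hq_past⟩)
  obtain ⟨y, hy, hyq⟩ := mem_closure_iff_seq_limit.1 hq_fut
  choose z hzS hxz hzy using fun n => h (x n) (hx n).1 (y n) (hx n).2 (hy n)
  obtain ⟨z₀, hz₀S, φ, hφ, hzz₀⟩ := hS.tendsto_subseq hzS
  have hqz₀ : (q, z₀) ∈ L.Kplus :=
    L.mem_Kplus_of_tendsto (hxq.comp hφ.tendsto_atTop) hzz₀ fun n => hxz (φ n)
  have hz₀q : (z₀, q) ∈ L.Kplus :=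
    L.mem_Kplus_of_tendsto hzz₀ (hyq.comp hφ.tendsto_atTop) fun n => hzy (φ n)
  exact hqS (hsc q z₀ hqz₀ hz₀q ▸ hz₀S)

lemma StablyCausal.tendsto_of_eventually_chron [LocallyCompactSpace X] (hsc : L.StablyCausal)
    (hpc : L.CausallyPathConnected) {q : X} (hq_past : q ∈ closure (L.Iminus q))
    (hq_fut : q ∈ closure (L.Iplus q)) {ι : Type*} {l : Filter ι} {p : ι → X}
    (hp : ∀ x y, L.chron x q → L.chron q y → ∀ᶠ i in l, L.chron x (p i) ∧ L.chron (p i) y) :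
    Tendsto p l (𝓝 q) := by
  obtain ⟨r, hr, hcpt⟩ := Metric.exists_isCompact_closedBall q
  refine Metric.tendsto_nhds.2 fun ε hε => ?_
  have hρ : 0 < min ε r := lt_min hε hr
  have hS : IsCompact (Metric.sphere q (min ε r)) :=
    hcpt.of_isClosed_subset Metric.isClosed_sphere
      (Metric.sphere_subset_closedBall.trans
        (Metric.closedBall_subset_closedBall (min_le_right _ _)))
  obtain ⟨x, hxq, y, hxq', hqy, hdisj⟩ := hsc.exists_chron_diamond_disjoint hq_past hq_fut
    Metric.isOpen_ball (Metric.mem_ball_self hρ) hS (by simp [hρ.ne])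
  filter_upwards [hp x y hxq' hqy] with i ⟨hxp, hpy⟩
  refine (not_le.1 fun hfar => ?_).trans_le (min_le_left ε r)
  obtain ⟨γ, a, b, hγ, rfl, hγb⟩ := hpc.2 x (p i) hxp
  obtain ⟨z, hz, hxz, hzp⟩ := hγ.exists_dist_eq q (Metric.mem_ball.1 hxq).le (hγb ▸ hfar)
  exact hdisj z hz hxz (L.causal_trans (hγb ▸ hzp) (L.chron_imp_causal hpy))

end LorentzianPreLengthSpace

namespace DistanceHomothetic

variable {X Y : Type*} [MetricSpace X] [MetricSpace Y] {LX : LorentzianPreLengthSpace X}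
  {LY : LorentzianPreLengthSpace Y} {f : X → Y}

lemma chron_iff (hf : DistanceHomothetic LX LY f) {p q : X} :
    LY.chron (f p) (f q) ↔ LX.chron p q := by
  obtain ⟨c, hc, h⟩ := hf
  rw [← LY.tau_pos_iff, ← LX.tau_pos_iff, h]
  simp [pos_iff_ne_zero, hc.ne']

lemma continuous_of_rightInverse [LocallyCompactSpace X] (hf : DistanceHomothetic LX LY f)
    (hX : LX.IsLengthSpace) (hsc : LX.StablyCausal) {g : Y → X}
    (hg : Function.RightInverse g f) : Continuous g := by
  refine continuous_iff_continuousAt.2 fun v => hsc.tendsto_of_eventually_chron hX.1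
    (hX.mem_closure_Iminus _) (hX.mem_closure_Iplus _) fun x y hx hy => ?_
  have hxv : v ∈ LY.Iplus (f x) := by
    have := hf.chron_iff.2 hx
    rwa [hg v] at this
  have hvy : v ∈ LY.Iminus (f y) := by
    have := hf.chron_iff.2 hy
    rwa [hg v] at this
  filter_upwards [(LY.isOpen_Iplus (f x)).mem_nhds hxv, (LY.isOpen_Iminus (f y)).mem_nhds hvy]
    with w hxw hwy
  exact ⟨hf.chron_iff.1 (by rwa [hg w]), hf.chron_iff.1 (by rwa [hg w])⟩

end DistanceHomothetic

lemma LorentzianPreLengthSpace.Kplus_subset_preimage {X Y : Type*} [MetricSpace X]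
    [MetricSpace Y] {LX : LorentzianPreLengthSpace X} {LY : LorentzianPreLengthSpace Y}
    {g : Y → X} (hg : Continuous g) (hchron : ∀ a b, LY.chron a b → LX.causal (g a) (g b))
    (hJ : {pq : Y × Y | LY.causal pq.1 pq.2} ⊆ closure {pq : Y × Y | LY.chron pq.1 pq.2}) :
    LY.Kplus ⊆ Prod.map g g ⁻¹' LX.Kplus := by
  have hclosed : IsClosed (Prod.map g g ⁻¹' LX.Kplus) :=
    LX.isClosed_Kplus.preimage (hg.prodMap hg)
  refine LY.Kplus_subset hclosed (fun _ _ _ => LX.Kplus_trans) (hJ.trans ?_)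
  exact closure_minimal (fun _ h => LX.subset_Kplus (hchron _ _ h)) hclosed

theorem distanceHomothetic_stablyCausal_general {X Y : Type*}
    [MetricSpace X] [MetricSpace Y] [LocallyCompactSpace X]
    (LX : LorentzianPreLengthSpace X) (LY : LorentzianPreLengthSpace Y)
    (hX : LX.IsLengthSpace) (hY : LY.IsLengthSpace) (hXsc : LX.StablyCausal)
    (f : X → Y) (hsurj : Function.Surjective f) (hhom : DistanceHomothetic LX LY f) :
    LY.StablyCausal := by
  obtain ⟨g, hg⟩ := hsurj.hasRightInverse
  have hK : LY.Kplus ⊆ Prod.map g g ⁻¹' LX.Kplus :=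
    LorentzianPreLengthSpace.Kplus_subset_preimage (hhom.continuous_of_rightInverse hX hXsc hg)
      (fun a b hab => LX.chron_imp_causal (hhom.chron_iff.1 (by rwa [hg a, hg b])))
      (LY.causal_subset_closure_chron hY.mem_closure_Iplus)
  exact fun u v huv hvu => hg.injective (hXsc _ _ (hK huv) (hK hvu))

/-- stable causality is transferred along surjective, locally causally
Lipschitz, distance homothetic maps between Lorentzian length spaces with locally compact
metrics. -/
theorem distanceHomothetic_stablyCausal {X Y : Type*}
    [MetricSpace X] [MetricSpace Y] [LocallyCompactSpace X] [LocallyCompactSpace Y]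
    (LX : LorentzianPreLengthSpace X) (LY : LorentzianPreLengthSpace Y)
    (hX : LX.IsLengthSpace) (hY : LY.IsLengthSpace) (hXsc : LX.StablyCausal)
    (f : X → Y) (hsurj : Function.Surjective f) (hhom : DistanceHomothetic LX LY f)
    (hlip : LocallyCausallyLipschitz LX f) :
    LY.StablyCausal :=
  distanceHomothetic_stablyCausal_general LX LY hX hY hXsc f hsurj hhom
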